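/- arXiv:1508.01448 — 2 statements merged into one kernel-verified Lean document; each statement's English description precedes it below -/
import Mathlib

section
/- For all A,B⊆E such that (V,E∖(A∩B)), (V,E∖A), (V,E∖B) and (V,E∖(A∪B)) are all connected, the function val is supermodular: val(A) + val(B) ≤ val(A∪B) + val(A∩B). -/
/-!
For a threshold `t` let `σ_t(U)` be the number of components of the graph formed by the edges
of `E ∖ U` of weight at most `t`. A connected `T ⊆ E ∖ U` has at least `σ_t(U) - 1` edges
heavier than `t`, and Kruskal's algorithm produces one meeting all these bounds at once; by the
layer-cake formula for `∑_{e ∈ T} w e` this gives `val(U) + N = ∑_{t < N} σ_t(U)` for any bound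
`N` on the weights. The component count `σ` is supermodular in the edge set: an edge that merges
two components of a graph also merges two components of each of its subgraphs. Since
`E ∖ (A ∪ B)` and `E ∖ (A ∩ B)` are the intersection and the union of `E ∖ A` and `E ∖ B`,
summing the supermodular inequality for `σ_t` over `t` proves the theorem.
-/

namespace MSTInterdiction

/-- A finite undirected loopless multigraph on vertex type `V` with edge type `E`:
each edge has two distinct endpoints (parallel edges allowed). -/
structure Multigraph (V : Type*) (E : Type*) where
  fst : E → V
  snd : E → V
  loopless : ∀ e, fst e ≠ snd e

variable {V E : Type*}

/-- Adjacency relation using only the edges in `U`. -/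
def Multigraph.rel (G : Multigraph V E) (U : Set E) (x y : V) : Prop :=
  ∃ e ∈ U, (G.fst e = x ∧ G.snd e = y) ∨ (G.fst e = y ∧ G.snd e = x)

/-- The graph `(V, U)` is connected. -/
def Multigraph.Connects (G : Multigraph V E) (U : Set E) : Prop :=
  ∀ x y : V, Relation.EqvGen (G.rel U) x y

/-- `σ(U)`: the number of connected components of `(V, U)`. -/
noncomputable def Multigraph.sigma (G : Multigraph V E) (U : Set E) : ℕ :=
  Nat.card (Quotient (Relation.EqvGen.setoid (G.rel U)))

/-- Total cost (or weight) of a set of edges. -/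
noncomputable def setSum (c : E → ℕ) (U : Set E) : ℕ := ∑ᶠ e ∈ U, c e

/-- `val(U)`: the weight of a minimum spanning tree of `(V, E ∖ U)`, i.e. the minimum
of `∑_{e ∈ T} w e` over `T ⊆ E ∖ U` with `(V, T)` connected. -/
noncomputable def Multigraph.val (G : Multigraph V E) (w : E → ℕ) (U : Set E) : ℕ :=
  sInf {n | ∃ T : Set E, T ⊆ Uᶜ ∧ G.Connects T ∧ setSum w T = n}

/-- `E_{≤ i}`: edges of weight `0` or of weight `2^ℓ` for some natural `ℓ ≤ i`.
In particular `Ele w (-1) = E_{-1}` is the set of edges of weight `0`. -/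
def Ele (w : E → ℕ) (i : ℤ) : Set E :=
  {e | w e = 0 ∨ ∃ ℓ : ℕ, (ℓ : ℤ) ≤ i ∧ w e = 2 ^ ℓ}

/-- The connected component of vertex `v` in the graph `(V, S)`. -/
def Multigraph.component (G : Multigraph V E) (S : Set E) (v : V) : Set V :=
  {u | Relation.EqvGen (G.rel S) v u}

/-- The partition of `V` into the connected components of `(V, S)`. -/
def Multigraph.parts (G : Multigraph V E) (S : Set E) : Set (Set V) :=
  {A | ∃ v : V, A = G.component S v}

/-- Edge `e` has exactly one endpoint in `A`. -/
def Multigraph.oneEnd (G : Multigraph V E) (A : Set V) (e : E) : Prop :=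
  (G.fst e ∈ A ∧ G.snd e ∉ A) ∨ (G.fst e ∉ A ∧ G.snd e ∈ A)

/-- Edge `e` has both endpoints in `A`. -/
def Multigraph.twoEnds (G : Multigraph V E) (A : Set V) (e : E) : Prop :=
  G.fst e ∈ A ∧ G.snd e ∈ A

theorem setSum_eq_sum_ncard {w : E → ℕ} {T : Set E} (hT : T.Finite) {N : ℕ}
    (hN : ∀ e ∈ T, w e ≤ N) :
    setSum w T = ∑ t ∈ Finset.range N, (T \ {e | w e ≤ t}).ncard := by
  lift T to Finset E using hT
  have hcard : ∀ t, ((T : Set E) \ {e | w e ≤ t}).ncard = (T.filter fun e => t < w e).card :=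
    fun t => by
      rw [← Set.ncard_coe_finset, Finset.coe_filter]
      simp only [Set.sdiff_eq, Set.compl_ofPred, not_le]
      rfl
  simp only [setSum, finsum_mem_coe_finset, hcard, Finset.card_filter]
  rw [Finset.sum_comm]
  refine Finset.sum_congr rfl fun e he => ?_
  rw [← Finset.card_filter, Finset.range_eq_Ico, Finset.Ico_filter_lt, min_eq_right (hN e he),
    Nat.card_Ico, Nat.sub_zero]

namespace Multigraph

abbrev Reachable (G : Multigraph V E) (S : Set E) : V → V → Prop := Relation.EqvGen (G.rel S)

abbrev Components (G : Multigraph V E) (S : Set E) : Type _ :=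
  Quotient (Relation.EqvGen.setoid (G.rel S))

variable {G : Multigraph V E}

theorem reachable_mono {S T : Set E} (h : S ⊆ T) : G.Reachable S ≤ G.Reachable T :=
  Relation.EqvGen.mono fun _ _ ⟨e, he, hends⟩ => ⟨e, h he, hends⟩

theorem reachable_of_mem {S : Set E} {e : E} (he : e ∈ S) : G.Reachable S (G.fst e) (G.snd e) :=
  .rel _ _ ⟨e, he, .inl ⟨rfl, rfl⟩⟩

theorem reachable_le_of_forall_reachable {S T : Set E}
    (h : ∀ e ∈ S, G.Reachable T (G.fst e) (G.snd e)) : G.Reachable S ≤ G.Reachable T := by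
  refine (Relation.EqvGen.mono ?_).trans_eq (Relation.EqvGen.is_equivalence _).eqvGen_eq
  rintro x y ⟨e, he, ⟨rfl, rfl⟩ | ⟨rfl, rfl⟩⟩
  · exact h e he
  · exact .symm _ _ (h e he)

theorem reachable_insert {S : Set E} {e : E} {x y : V} (h : G.Reachable (insert e S) x y) :
    G.Reachable S x y ∨ (G.Reachable S x (G.fst e) ∨ G.Reachable S x (G.snd e)) ∧
      (G.Reachable S y (G.fst e) ∨ G.Reachable S y (G.snd e)) := by
  have closed : ∀ {a b}, G.Reachable S a b →
      (G.Reachable S b (G.fst e) ∨ G.Reachable S b (G.snd e)) →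
        (G.Reachable S a (G.fst e) ∨ G.Reachable S a (G.snd e)) :=
    fun hab => Or.imp (.trans _ _ _ hab) (.trans _ _ _ hab)
  induction h with
  | rel a b hab =>
    obtain ⟨f, hf | hf, hends⟩ := hab
    · subst hf
      rcases hends with ⟨rfl, rfl⟩ | ⟨rfl, rfl⟩
      · exact .inr ⟨.inl (.refl _), .inr (.refl _)⟩
      · exact .inr ⟨.inr (.refl _), .inl (.refl _)⟩
    · exact .inl (.rel _ _ ⟨f, hf, hends⟩)
  | refl a => exact .inl (.refl a)
  | symm a b _ ih => exact ih.imp (.symm _ _) And.symm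
  | trans a b c _ _ ihab ihbc =>
    rcases ihab with hab | ⟨ha, hb⟩ <;> rcases ihbc with hbc | ⟨hb', hc⟩
    · exact .inl (.trans _ _ _ hab hbc)
    · exact .inr ⟨closed hab hb', hc⟩
    · exact .inr ⟨ha, closed (.symm _ _ hbc) hb⟩
    · exact .inr ⟨ha, hc⟩

def componentMap (G : Multigraph V E) {S T : Set E} (h : S ⊆ T) :
    G.Components S → G.Components T :=
  Quotient.map' id fun _ _ => reachable_mono h _ _

theorem componentMap_surjective {S T : Set E} (h : S ⊆ T) :
    Function.Surjective (G.componentMap h) :=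
  fun c => c.inductionOn' fun a => ⟨Quotient.mk'' a, rfl⟩

theorem sigma_antitone [Finite V] : Antitone G.sigma :=
  fun _ _ h => Nat.card_le_card_of_surjective _ (G.componentMap_surjective h)

theorem sigma_congr {S T : Set E} (h : G.Reachable S = G.Reachable T) : G.sigma S = G.sigma T :=
  Nat.card_congr <| Quotient.congrRight fun a b => by
    change G.Reachable S a b ↔ G.Reachable T a b
    rw [h]

theorem sigma_empty : G.sigma ∅ = Nat.card V := by
  have hreach : G.Reachable ∅ ≤ Eq := (Relation.EqvGen.mono fun _ _ ⟨_, he, _⟩ =>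
    (Set.notMem_empty _ he).elim).trans_eq (Equivalence.eqvGen_eq eq_equivalence)
  exact (Nat.card_congr (Equiv.ofBijective _
    ⟨fun a b hab => hreach a b (Quotient.exact' hab), Quotient.mk''_surjective⟩)).symm

theorem sigma_eq_one_of_connects [Nonempty V] {S : Set E} (h : G.Connects S) : G.sigma S = 1 :=
  Nat.card_eq_one_iff_unique.mpr
    ⟨⟨fun a b => Quotient.inductionOn₂' a b fun x y => Quotient.sound' (h x y)⟩,
      ⟨Quotient.mk'' (Classical.arbitrary V)⟩⟩

theorem sigma_insert_of_reachable {S : Set E} {e : E} (h : G.Reachable S (G.fst e) (G.snd e)) :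
    G.sigma (insert e S) = G.sigma S :=
  sigma_congr <| le_antisymm
    (reachable_le_of_forall_reachable fun _ hf => hf.elim (· ▸ h) reachable_of_mem)
    (reachable_mono (Set.subset_insert e S))

-- Adding `e` merges the component of `G.fst e` with that of `G.snd e` and nothing else.
theorem injOn_componentMap_insert (S : Set E) (e : E) :
    Set.InjOn (G.componentMap (Set.subset_insert e S))
      {(Quotient.mk'' (G.fst e) : G.Components S)}ᶜ := by
  intro x hx y hy hxy
  induction x using Quotient.inductionOn' with | h a =>
  induction y using Quotient.inductionOn' with | h b =>
  have ha : ¬ G.Reachable S a (G.fst e) := fun h => hx (Quotient.sound' h)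
  have hb : ¬ G.Reachable S b (G.fst e) := fun h => hy (Quotient.sound' h)
  refine Quotient.sound' ((reachable_insert (Quotient.exact' hxy)).elim id fun ⟨ha', hb'⟩ => ?_)
  exact .trans _ _ _ (ha'.resolve_left ha) (.symm _ _ (hb'.resolve_left hb))

theorem sigma_eq_ncard_image_add_one [Finite V] (S : Set E) (e : E) :
    G.sigma S = (G.componentMap (Set.subset_insert e S) ''
      {(Quotient.mk'' (G.fst e) : G.Components S)}ᶜ).ncard + 1 := by
  rw [(injOn_componentMap_insert S e).ncard_image, add_comm,
    ← Set.ncard_singleton (Quotient.mk'' (G.fst e) : G.Components S), Set.ncard_add_ncard_compl]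
  rfl

theorem sigma_le_sigma_insert_add_one [Finite V] (S : Set E) (e : E) :
    G.sigma S ≤ G.sigma (insert e S) + 1 := by
  rw [sigma_eq_ncard_image_add_one S e]
  exact Nat.add_le_add_right (Set.ncard_le_card _) 1

theorem sigma_insert_add_one [Finite V] {S : Set E} {e : E}
    (h : ¬ G.Reachable S (G.fst e) (G.snd e)) : G.sigma (insert e S) + 1 = G.sigma S := by
  have hsurj : G.componentMap (Set.subset_insert e S) ''
      {(Quotient.mk'' (G.fst e) : G.Components S)}ᶜ = Set.univ := by
    refine Set.eq_univ_of_forall fun c => c.inductionOn' fun a => ?_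
    by_cases ha : (Quotient.mk'' a : G.Components S) = Quotient.mk'' (G.fst e)
    · refine ⟨Quotient.mk'' (G.snd e), fun hs => h (.symm _ _ (Quotient.exact' hs)), ?_⟩
      have hae : G.Reachable (insert e S) a (G.fst e) :=
        reachable_mono (Set.subset_insert e S) _ _ (Quotient.exact' ha)
      exact Quotient.sound' (.symm _ _ (.trans _ _ _ hae (reachable_of_mem (Set.mem_insert e S))))
    · exact ⟨_, ha, rfl⟩
  rw [sigma_eq_ncard_image_add_one S e, hsurj, Set.ncard_univ]
  rfl

theorem sigma_le_sigma_union_add_ncard [Finite V] (S : Set E) {D : Set E} (hD : D.Finite) :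
    G.sigma S ≤ G.sigma (S ∪ D) + D.ncard := by
  induction D, hD using Set.Finite.induction_on with
  | empty => simp
  | @insert e D he hD ih =>
    rw [Set.union_insert, Set.ncard_insert_of_notMem he hD]
    have := G.sigma_le_sigma_insert_add_one (S ∪ D) e
    omega

theorem sigma_insert_add_sigma_le [Finite V] {X Y : Set E} (hXY : X ⊆ Y) (e : E) :
    G.sigma (insert e X) + G.sigma Y ≤ G.sigma X + G.sigma (insert e Y) := by
  by_cases h : G.Reachable X (G.fst e) (G.snd e)
  · rw [sigma_insert_of_reachable h, sigma_insert_of_reachable (reachable_mono hXY _ _ h)]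
  · have := sigma_insert_add_one h
    have := G.sigma_le_sigma_insert_add_one Y e
    omega

theorem sigma_union_add_sigma_le [Finite V] {X Y D : Set E} (hXY : X ⊆ Y) (hD : D.Finite) :
    G.sigma (X ∪ D) + G.sigma Y ≤ G.sigma X + G.sigma (Y ∪ D) := by
  induction D, hD using Set.Finite.induction_on with
  | empty => simp
  | @insert e D _ _ ih =>
    simp only [Set.union_insert]
    have := sigma_insert_add_sigma_le (G := G) (Set.union_subset_union_left D hXY) e
    omega

theorem sigma_add_sigma_le_sigma_inter_add_sigma_union [Finite V] {S T : Set E}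
    (h : (S \ T).Finite) : G.sigma S + G.sigma T ≤ G.sigma (S ∩ T) + G.sigma (S ∪ T) := by
  have := sigma_union_add_sigma_le (G := G) (Set.inter_subset_right (s := S) (t := T)) h
  rwa [Set.inter_union_sdiff, Set.union_sdiff_self, Set.union_comm T] at this

theorem card_le_ncard_add_sigma [Finite V] {S : Set E} (hS : S.Finite) :
    Nat.card V ≤ S.ncard + G.sigma S := by
  have := G.sigma_le_sigma_union_add_ncard ∅ hS
  rw [Set.empty_union, sigma_empty] at this
  omega

variable (G) in
/-- Acyclicity in numerical form: `T` has `|V| - σ(T)` edges, i.e. each edge of `T` lowers the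
number of components by one. -/
def IsForest (T : Set E) : Prop := T.ncard + G.sigma T = Nat.card V

theorem isForest_empty : G.IsForest ∅ := by
  rw [IsForest, Set.ncard_empty, sigma_empty, zero_add]

section Forest

variable [Finite V] [Finite E]

theorem IsForest.subset {R T : Set E} (hT : G.IsForest T) (hRT : R ⊆ T) : G.IsForest R := by
  have h1 := G.sigma_le_sigma_union_add_ncard R (T \ R).toFinite
  rw [Set.union_sdiff_cancel hRT] at h1
  have h2 := Set.ncard_sdiff_add_ncard_of_subset hRT
  have h3 := G.card_le_ncard_add_sigma R.toFinite
  unfold IsForest at *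
  omega

theorem IsForest.insert {T : Set E} {e : E} (hT : G.IsForest T)
    (he : ¬ G.Reachable T (G.fst e) (G.snd e)) : G.IsForest (insert e T) := by
  have heT : e ∉ T := fun h => he (reachable_of_mem h)
  have := sigma_insert_add_one he
  unfold IsForest at *
  rw [Set.ncard_insert_of_notMem heT]
  omega

theorem IsForest.exists_spanning_extension {R S : Set E} (hR : G.IsForest R) (hRS : R ⊆ S) :
    ∃ T, R ⊆ T ∧ T ⊆ S ∧ G.IsForest T ∧ G.Reachable T = G.Reachable S := by
  obtain ⟨T, ⟨hRT, hTS, hT⟩, hmax⟩ :=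
    (Set.toFinite {T | R ⊆ T ∧ T ⊆ S ∧ G.IsForest T}).exists_maximal
      ⟨R, subset_rfl, hRS, hR⟩
  refine ⟨T, hRT, hTS, hT, le_antisymm (reachable_mono hTS)
    (reachable_le_of_forall_reachable fun e he => ?_)⟩
  by_contra hne
  have hins := hmax ⟨hRT.trans (Set.subset_insert e T), Set.insert_subset he hTS, hT.insert hne⟩
    (Set.subset_insert e T)
  exact hne (reachable_of_mem (hins (Set.mem_insert e T)))

-- Kruskal's algorithm, run along the chain `F 0 ⊆ F 1 ⊆ ⋯`.
theorem exists_isForest_reachable_inter_eq {F : ℕ → Set E} (hF : Monotone F) (t : ℕ) :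
    ∃ T ⊆ F t, G.IsForest T ∧ ∀ s ≤ t, G.Reachable (T ∩ F s) = G.Reachable (F s) := by
  induction t with
  | zero =>
    obtain ⟨T, -, hTF, hT, hspan⟩ :=
      (isForest_empty (G := G)).exists_spanning_extension (Set.empty_subset (F 0))
    refine ⟨T, hTF, hT, fun s hs => ?_⟩
    rw [Nat.le_zero.mp hs, Set.inter_eq_left.mpr hTF, hspan]
  | succ t ih =>
    obtain ⟨T, hTF, hT, hspan⟩ := ih
    obtain ⟨T', hTT', hT'F, hT', hspan'⟩ :=
      hT.exists_spanning_extension (hTF.trans (hF t.le_succ))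
    refine ⟨T', hT'F, hT', fun s hs => ?_⟩
    rcases hs.lt_or_eq with hs | rfl
    · refine le_antisymm (reachable_mono Set.inter_subset_right) ?_
      rw [← hspan s (Nat.lt_succ_iff.mp hs)]
      exact reachable_mono (Set.inter_subset_inter_left _ hTT')
    · rw [Set.inter_eq_left.mpr hT'F, hspan']

end Forest

theorem val_of_isEmpty [IsEmpty V] (w : E → ℕ) (U : Set E) : G.val w U = 0 :=
  Nat.sInf_eq_zero.mpr <|
    .inl ⟨∅, Set.empty_subset _, fun x => isEmptyElim x, finsum_mem_empty⟩

section SpanningTree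

variable [Finite V] [Nonempty V]

theorem sigma_inter_le_ncard_add_one (w : E → ℕ) {F T : Set E} (hT : T.Finite) (hTF : T ⊆ F)
    (hconn : G.Connects T) (t : ℕ) :
    G.sigma (F ∩ {e | w e ≤ t}) ≤ (T \ {e | w e ≤ t}).ncard + 1 :=
  calc G.sigma (F ∩ {e | w e ≤ t})
    _ ≤ G.sigma (T ∩ {e | w e ≤ t}) := G.sigma_antitone (Set.inter_subset_inter_left _ hTF)
    _ ≤ G.sigma (T ∩ {e | w e ≤ t} ∪ T \ {e | w e ≤ t}) + (T \ {e | w e ≤ t}).ncard :=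
      G.sigma_le_sigma_union_add_ncard _ hT.sdiff
    _ = (T \ {e | w e ≤ t}).ncard + 1 := by
      rw [Set.inter_union_sdiff, sigma_eq_one_of_connects hconn, add_comm]

variable [Finite E]

theorem exists_connects_sigma_inter_eq (w : E → ℕ) {F : Set E} (hF : G.Connects F) {N : ℕ}
    (hN : ∀ e ∈ F, w e ≤ N) : ∃ T ⊆ F, G.Connects T ∧
      ∀ t ≤ N, G.sigma (F ∩ {e | w e ≤ t}) = (T \ {e | w e ≤ t}).ncard + 1 := by
  have hmono : Monotone fun t => F ∩ {e | w e ≤ t} :=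
    fun _ _ hst => Set.inter_subset_inter_right _ fun _ he => le_trans he hst
  obtain ⟨T, hTF, hT, hspan⟩ := G.exists_isForest_reachable_inter_eq hmono N
  have hFN : F ∩ {e | w e ≤ N} = F := Set.inter_eq_left.mpr hN
  have hTN := hspan N le_rfl
  rw [Set.inter_eq_left.mpr hTF, hFN] at hTN
  rw [hFN] at hTF
  have hTconn : G.Connects T := fun x y => (congrFun₂ hTN x y).mpr (hF x y)
  refine ⟨T, hTF, hTconn, fun t ht => ?_⟩
  have hTt : T ∩ (F ∩ {e | w e ≤ t}) = T ∩ {e | w e ≤ t} := by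
    rw [← Set.inter_assoc, Set.inter_eq_left.mpr hTF]
  have hforest := hT.subset (Set.inter_subset_left : T ∩ {e | w e ≤ t} ⊆ T)
  have hσ := sigma_congr (hspan t ht)
  have hσT := sigma_eq_one_of_connects hTconn
  have hsplit := Set.ncard_inter_add_ncard_sdiff_eq_ncard T {e | w e ≤ t}
  rw [hTt] at hσ
  unfold IsForest at hT hforest
  omega

theorem val_add_eq_sum_sigma (w : E → ℕ) {U : Set E} (hU : G.Connects Uᶜ) {N : ℕ}
    (hN : ∀ e, w e ≤ N) :
    G.val w U + N = ∑ t ∈ Finset.range N, G.sigma (Uᶜ ∩ {e | w e ≤ t}) := by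
  have hlayer : ∀ T : Set E,
      setSum w T + N = ∑ t ∈ Finset.range N, ((T \ {e | w e ≤ t}).ncard + 1) := fun T => by
    rw [setSum_eq_sum_ncard T.toFinite fun e _ => hN e, Finset.sum_add_distrib, Finset.sum_const,
      Finset.card_range, smul_eq_mul, mul_one]
  obtain ⟨T, hTU, hT, hσ⟩ := G.exists_connects_sigma_inter_eq w hU fun e _ => hN e
  have hval_mem :
      G.val w U ∈ {n | ∃ T : Set E, T ⊆ Uᶜ ∧ G.Connects T ∧ setSum w T = n} :=
    Nat.sInf_mem ⟨setSum w T, T, hTU, hT, rfl⟩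
  have hval_le : G.val w U ≤ setSum w T := Nat.sInf_le ⟨T, hTU, hT, rfl⟩
  obtain ⟨T₀, hT₀U, hT₀, hT₀val⟩ := hval_mem
  refine le_antisymm ?_ ?_
  · calc G.val w U + N
      _ ≤ setSum w T + N := Nat.add_le_add_right hval_le N
      _ = _ := by
        rw [hlayer]
        exact Finset.sum_congr rfl fun t ht => (hσ t (Finset.mem_range.mp ht).le).symm
  · calc ∑ t ∈ Finset.range N, G.sigma (Uᶜ ∩ {e | w e ≤ t})
      _ ≤ ∑ t ∈ Finset.range N, ((T₀ \ {e | w e ≤ t}).ncard + 1) :=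
        Finset.sum_le_sum fun t _ => G.sigma_inter_le_ncard_add_one w T₀.toFinite hT₀U hT₀ t
      _ = G.val w U + N := by rw [← hlayer, hT₀val]

end SpanningTree

end Multigraph

/-- The MST weight `val` is supermodular: whenever removing `A∩B`, `A`,
`B`, and `A∪B` each leaves the graph connected,
`val(A) + val(B) ≤ val(A∪B) + val(A∩B)`. -/
theorem val_supermodular
    [Fintype V] [Fintype E]
    (G : Multigraph V E) (w : E → ℕ) (A B : Set E)
    (hInter : G.Connects (A ∩ B)ᶜ)
    (hA : G.Connects Aᶜ)
    (hB : G.Connects Bᶜ)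
    (hUnion : G.Connects (A ∪ B)ᶜ) :
    G.val w A + G.val w B ≤ G.val w (A ∪ B) + G.val w (A ∩ B) := by
  cases isEmpty_or_nonempty V
  · simp only [G.val_of_isEmpty, le_refl]
  obtain ⟨N, hN⟩ : ∃ N, ∀ e, w e ≤ N :=
    ⟨Finset.univ.sup w, fun e => Finset.le_sup (Finset.mem_univ e)⟩
  have hσ : ∀ t ∈ Finset.range N,
      G.sigma (Aᶜ ∩ {e | w e ≤ t}) + G.sigma (Bᶜ ∩ {e | w e ≤ t}) ≤
        G.sigma ((A ∪ B)ᶜ ∩ {e | w e ≤ t}) + G.sigma ((A ∩ B)ᶜ ∩ {e | w e ≤ t}) := by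
    intro t _
    rw [Set.compl_union, Set.compl_inter, Set.inter_inter_distrib_right,
      Set.union_inter_distrib_right]
    exact G.sigma_add_sigma_le_sigma_inter_add_sigma_union (Set.toFinite _)
  have hsum := Finset.sum_le_sum hσ
  rw [Finset.sum_add_distrib, Finset.sum_add_distrib, ← G.val_add_eq_sum_sigma w hA hN,
    ← G.val_add_eq_sum_sigma w hB hN, ← G.val_add_eq_sum_sigma w hUnion hN,
    ← G.val_add_eq_sum_sigma w hInter hN] at hsum
  omega

end MSTInterdiction
end

section
/- Let 𝒲 be an efficient removal pattern with removal set R = R(𝒲), and assume U ≠ ∅. Then g_p^𝒲(V) ≥ (1/2)·(c(R)/c(U))·val(U) − 2^p. -/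
/-!
By induction over the levels, every `A ∈ 𝒜_i` satisfies
`κ_i^𝒲(A) · g_i(A) ≤ (g_i^𝒲(A) + 2^i) · κ_i(A) + 2^i · κ_i^𝒲(A)`, i.e. inside `A`
the pattern gains at least its cost times `ρ_i(A)`, up to a slack that halves from level
to level. When clause (ii) of efficiency applies at `A`, the pattern consists of a prefix of the
children sorted by decreasing `ρ_{i-1}` and a part of the next child, and an exchange argument
shows that such a selection has ratio `g/κ` at least that of all children together.

At `A = V` on level `p` we have `κ_p(V) = 2 c(U)`, `κ_p^𝒲(V) ≥ c(R)` because every removed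
edge is counted by `κ` of a member of `𝒲`, and `g_p(V) ≥ val(U) + 2^{p+1}` because Kruskal's
algorithm, run level by level, pays at most `2^ℓ` for every merge of components on level `ℓ`.
-/

namespace MSTInterdiction

variable {V E : Type*}

section Patterns

variable [Fintype V] [Fintype E]

/-- The auxiliary cost `κ_i(A)`: the cost of edges of `U_{≤i} = U ∩ E_{≤i}` with exactly
one endpoint in `A`, plus twice the cost of those with both endpoints in `A`. -/
noncomputable def kappa (G : Multigraph V E) (w c : E → ℕ) (U : Set E)
    (i : ℤ) (A : Set V) : ℕ :=
  setSum c {e | e ∈ U ∩ Ele w i ∧ G.oneEnd A e}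
    + 2 * setSum c {e | e ∈ U ∩ Ele w i ∧ G.twoEnds A e}

/-- The auxiliary impact `g_i(A) = |{D ∈ 𝒜_{−1} : D ⊆ A}| + Σ_{ℓ=0}^{i} 2^ℓ·|{D ∈ 𝒜_ℓ : D ⊆ A}|`,
where `𝒜_ℓ` is the partition of `V` into connected components of `(V, E_{≤ℓ} ∖ U)`. -/
noncomputable def gfun (G : Multigraph V E) (w : E → ℕ) (U : Set E)
    (i : ℤ) (A : Set V) : ℕ :=
  Nat.card {D : Set V | D ∈ G.parts (Ele w (-1) \ U) ∧ D ⊆ A}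
    + ∑ ℓ ∈ Finset.range (i + 1).toNat,
        2 ^ ℓ * Nat.card {D : Set V | D ∈ G.parts (Ele w (ℓ : ℤ) \ U) ∧ D ⊆ A}

/-- A removal pattern: a finite family of tuples `(W, i)` with `i ∈ {−1, …, p−1}`,
`W ∈ 𝒜_i`, and the sets `W` pairwise disjoint. -/
structure IsRemovalPattern (G : Multigraph V E) (w : E → ℕ) (U : Set E) (p : ℕ)
    (𝒲 : Set (Set V × ℤ)) : Prop where
  finite : 𝒲.Finite
  levels : ∀ x ∈ 𝒲, -1 ≤ x.2 ∧ x.2 ≤ (p : ℤ) - 1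
  parts : ∀ x ∈ 𝒲, x.1 ∈ G.parts (Ele w x.2 \ U)
  disjoint : ∀ x ∈ 𝒲, ∀ y ∈ 𝒲, x ≠ y → Disjoint x.1 y.1

/-- The removal set `R(𝒲) = ⋃_{(W,i) ∈ 𝒲} {e ∈ U_{≤i} : exactly one endpoint of e in W}`. -/
def removalSet (G : Multigraph V E) (w : E → ℕ) (U : Set E)
    (𝒲 : Set (Set V × ℤ)) : Set E :=
  {e | ∃ x ∈ 𝒲, e ∈ U ∩ Ele w x.2 ∧ G.oneEnd x.1 e}

/-- `κ_i^𝒲(A) = Σ κ_j(W)` over `(W,j) ∈ 𝒲` with `W ⊆ A` and `j ≤ i`. -/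
noncomputable def kappaW (G : Multigraph V E) (w c : E → ℕ) (U : Set E)
    (𝒲 : Set (Set V × ℤ)) (i : ℤ) (A : Set V) : ℕ :=
  ∑ᶠ x ∈ {x ∈ 𝒲 | x.1 ⊆ A ∧ x.2 ≤ i}, kappa G w c U x.2 x.1

/-- `g_i^𝒲(A) = Σ g_j(W)` over `(W,j) ∈ 𝒲` with `W ⊆ A` and `j ≤ i`. -/
noncomputable def gW (G : Multigraph V E) (w : E → ℕ) (U : Set E)
    (𝒲 : Set (Set V × ℤ)) (i : ℤ) (A : Set V) : ℕ :=
  ∑ᶠ x ∈ {x ∈ 𝒲 | x.1 ⊆ A ∧ x.2 ≤ i}, gfun G w U x.2 x.1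

/-- An *efficient* removal pattern: for every level `i ∈ {0,…,p}` and every `A ∈ 𝒜_i`,
either no member of `𝒲` on a level below `i` is contained in `A`, or all members of `𝒲`
on levels below `i` are contained in `A` and there is a numbering `Q_0, …, Q_{h-1}`
of the children `𝒞_i(A)` by nonincreasing auxiliary efficiency `ρ_{i-1} = g_{i-1}/κ_{i-1}`
(expressed by cross-multiplication, which encodes the convention `ρ = ∞` when `κ = 0`)
and an index `s ≤ h` such that exactly `Q_0, …, Q_{s-1}` belong to `𝒲` on level `i−1`
and every member of `𝒲` on a level `≤ i−2` is contained in `Q_s`. -/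
def IsEfficient (G : Multigraph V E) (w c : E → ℕ) (U : Set E) (p : ℕ)
    (𝒲 : Set (Set V × ℤ)) : Prop :=
  ∀ i : ℤ, 0 ≤ i → i ≤ (p : ℤ) → ∀ A ∈ G.parts (Ele w i \ U),
    (∀ x ∈ 𝒲, x.2 < i → ¬x.1 ⊆ A) ∨
    ((∀ x ∈ 𝒲, x.2 < i → x.1 ⊆ A) ∧
      ∃ (h : ℕ) (Q : Fin h → Set V) (s : ℕ),
        Function.Injective Q ∧
        (∀ D : Set V, (D ∈ G.parts (Ele w (i - 1) \ U) ∧ D ⊆ A) ↔ ∃ k, Q k = D) ∧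
        (∀ j k : Fin h, j ≤ k →
          gfun G w U (i - 1) (Q k) * kappa G w c U (i - 1) (Q j)
            ≤ gfun G w U (i - 1) (Q j) * kappa G w c U (i - 1) (Q k)) ∧
        s ≤ h ∧
        (∀ k : Fin h, (k : ℕ) < s → (Q k, i - 1) ∈ 𝒲) ∧
        (∀ k : Fin h, s ≤ (k : ℕ) → (Q k, i - 1) ∉ 𝒲) ∧
        (∀ x ∈ 𝒲, x.2 ≤ i - 2 → ∃ hs : s < h, x.1 ⊆ Q ⟨s, hs⟩))

end Patterns

open Relation Function

section SetSum

variable [Fintype E] (c : E → ℕ)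

lemma setSum_eq_sum_indicator (S : Set E) : setSum c S = ∑ e, S.indicator c e := by
  rw [setSum, finsum_mem_def, finsum_eq_sum_of_fintype]

lemma setSum_union_le (S T : Set E) : setSum c (S ∪ T) ≤ setSum c S + setSum c T := by
  simp only [setSum_eq_sum_indicator, ← Finset.sum_add_distrib]
  exact Finset.sum_le_sum fun e _ =>
    (Nat.le_add_right _ _).trans_eq (Set.indicator_union_add_inter_apply c S T e)

lemma setSum_insert_le (e : E) (S : Set E) : setSum c (insert e S) ≤ c e + setSum c S := by
  have hsingle : setSum c {e} = c e := finsum_mem_singleton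
  simpa [hsingle] using setSum_union_le c {e} S

end SetSum

lemma setSum_eq_zero {c : E → ℕ} {S : Set E} (h : ∀ e ∈ S, c e = 0) : setSum c S = 0 :=
  finsum_mem_eq_zero_of_forall_eq_zero h

lemma nonempty_of_setSum_ne_zero {c : E → ℕ} {S : Set E} (h : setSum c S ≠ 0) : S.Nonempty :=
  Set.nonempty_iff_ne_empty.2 fun hS => h (by simp [hS, setSum])

lemma Ele_mono (w : E → ℕ) {i j : ℤ} (h : i ≤ j) : Ele w i ⊆ Ele w j := by
  rintro e (h0 | ⟨ℓ, hℓ, hw⟩)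
  exacts [Or.inl h0, Or.inr ⟨ℓ, hℓ.trans h, hw⟩]

lemma weight_eq_zero_of_mem_Ele_neg_one {w : E → ℕ} {e : E} (he : e ∈ Ele w (-1)) :
    w e = 0 := by
  rcases he with h0 | ⟨ℓ, hℓ, -⟩
  exacts [h0, by omega]

lemma weight_le_of_mem_Ele {w : E → ℕ} {n : ℕ} {e : E} (he : e ∈ Ele w n) :
    w e ≤ 2 ^ n := by
  rcases he with h0 | ⟨ℓ, hℓ, hw⟩
  · simp [h0]
  · exact hw ▸ Nat.pow_le_pow_right two_pos (by omega)

namespace Multigraph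

variable (G : Multigraph V E)

lemma mem_component_self (S : Set E) (v : V) : v ∈ G.component S v :=
  EqvGen.refl v

lemma component_mem_parts (S : Set E) (v : V) : G.component S v ∈ G.parts S :=
  ⟨v, rfl⟩

lemma component_eq_of_eqvGen {S : Set E} {u v : V} (h : EqvGen (G.rel S) u v) :
    G.component S u = G.component S v := by
  ext x
  exact ⟨fun hx => (h.symm _ _).trans _ _ _ hx, fun hx => h.trans _ _ _ hx⟩

variable {G} {S T : Set E} {A B : Set V}

lemma nonempty_of_mem_parts (hA : A ∈ G.parts S) : A.Nonempty := by
  obtain ⟨v, rfl⟩ := hA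
  exact ⟨v, G.mem_component_self S v⟩

lemma eq_component_of_mem_parts (hA : A ∈ G.parts S) {v : V} (hv : v ∈ A) :
    A = G.component S v := by
  obtain ⟨u, rfl⟩ := hA
  exact G.component_eq_of_eqvGen hv

lemma eq_of_mem_parts_of_mem (hA : A ∈ G.parts S) (hB : B ∈ G.parts S) {v : V}
    (hvA : v ∈ A) (hvB : v ∈ B) : A = B := by
  rw [eq_component_of_mem_parts hA hvA, eq_component_of_mem_parts hB hvB]

lemma disjoint_of_mem_parts (hA : A ∈ G.parts S) (hB : B ∈ G.parts S) (h : A ≠ B) :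
    Disjoint A B :=
  Set.disjoint_left.2 fun _ hvA hvB => h (eq_of_mem_parts_of_mem hA hB hvA hvB)

lemma eq_of_mem_parts_of_subset (hA : A ∈ G.parts S) (hB : B ∈ G.parts S) (h : A ⊆ B) :
    A = B :=
  let ⟨_, hv⟩ := nonempty_of_mem_parts hA
  eq_of_mem_parts_of_mem hA hB hv (h hv)

lemma eqvGen_mono (hST : S ⊆ T) {x y : V} (h : EqvGen (G.rel S) x y) :
    EqvGen (G.rel T) x y :=
  h.mono fun _ _ ⟨e, he, hends⟩ => ⟨e, hST he, hends⟩

lemma exists_mem_parts_superset (hST : S ⊆ T) (hA : A ∈ G.parts S) :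
    ∃ B ∈ G.parts T, A ⊆ B := by
  obtain ⟨v, rfl⟩ := hA
  exact ⟨G.component T v, G.component_mem_parts T v, fun _ hx => eqvGen_mono hST hx⟩

lemma eqvGen_of_forall_mem_eqvGen (h : ∀ e ∈ T, EqvGen (G.rel S) (G.fst e) (G.snd e))
    {x y : V} (hxy : EqvGen (G.rel T) x y) : EqvGen (G.rel S) x y :=
  (EqvGen.is_equivalence _).eqvGen_iff.1 <| hxy.mono fun _ _ ⟨e, he, hends⟩ => by
    rcases hends with ⟨rfl, rfl⟩ | ⟨rfl, rfl⟩
    exacts [h e he, (h e he).symm _ _]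

variable (G)

lemma biUnion_component_of_subset (hST : S ⊆ T) (v : V) :
    ⋃ u ∈ G.component S v, G.component T u = G.component T v := by
  ext x
  simp only [Set.mem_iUnion, exists_prop]
  refine ⟨fun ⟨u, hu, hx⟩ => (eqvGen_mono hST hu).trans _ _ _ hx,
    fun hx => ⟨v, G.mem_component_self S v, hx⟩⟩

lemma parts_eq_image_of_subset (hST : S ⊆ T) :
    G.parts T = (fun A => ⋃ u ∈ A, G.component T u) '' G.parts S := by
  ext B
  constructor
  · rintro ⟨v, rfl⟩
    exact ⟨_, G.component_mem_parts S v, G.biUnion_component_of_subset hST v⟩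
  · rintro ⟨_, ⟨v, rfl⟩, rfl⟩
    exact ⟨v, G.biUnion_component_of_subset hST v⟩

lemma ncard_parts_insert_lt [Finite V] {e : E}
    (he : ¬ EqvGen (G.rel S) (G.fst e) (G.snd e)) :
    (G.parts (insert e S)).ncard < (G.parts S).ncard := by
  rw [G.parts_eq_image_of_subset (Set.subset_insert e S)]
  refine (Set.ncard_image_le (Set.toFinite _)).lt_of_ne fun hcard => ?_
  have hinj := Set.injOn_of_ncard_image_eq hcard (Set.toFinite _)
  have hmerge : EqvGen (G.rel (insert e S)) (G.fst e) (G.snd e) :=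
    EqvGen.rel _ _ ⟨e, Set.mem_insert e S, Or.inl ⟨rfl, rfl⟩⟩
  have hsame := hinj (G.component_mem_parts S (G.fst e)) (G.component_mem_parts S (G.snd e))
    (by simp only [G.biUnion_component_of_subset (Set.subset_insert e S),
      G.component_eq_of_eqvGen hmerge])
  have hsnd := G.mem_component_self S (G.snd e)
  rw [← hsame] at hsnd
  exact he hsnd

lemma exists_mem_parts_between {R : Set E} (hST : S ⊆ T) (hTR : T ⊆ R) {A D : Set V}
    (hA : A ∈ G.parts R) (hD : D ∈ G.parts S) (hDA : D ⊆ A) :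
    ∃ B ∈ G.parts T, D ⊆ B ∧ B ⊆ A := by
  obtain ⟨B, hB, hDB⟩ := G.exists_mem_parts_superset hST hD
  obtain ⟨A', hA', hBA'⟩ := G.exists_mem_parts_superset hTR hB
  obtain ⟨v, hv⟩ := nonempty_of_mem_parts hD
  obtain rfl := eq_of_mem_parts_of_mem hA hA' (hDA hv) (hBA' (hDB hv))
  exact ⟨B, hB, hDB, hBA'⟩

lemma ncard_parts_subset_eq_sum [Finite V] {ι : Type*} [Fintype ι] {A : Set V} {Q : ι → Set V}
    (hdisj : Pairwise (Disjoint on Q)) (hQA : ∀ k, Q k ⊆ A)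
    (hcover : ∀ D ∈ G.parts S, D ⊆ A → ∃ k, D ⊆ Q k) :
    {D | D ∈ G.parts S ∧ D ⊆ A}.ncard = ∑ k, {D | D ∈ G.parts S ∧ D ⊆ Q k}.ncard := by
  have hunion : {D | D ∈ G.parts S ∧ D ⊆ A} = ⋃ k, {D | D ∈ G.parts S ∧ D ⊆ Q k} := by
    ext D
    simp only [Set.mem_ofPred_eq, Set.mem_iUnion]
    exact ⟨fun ⟨hD, hDA⟩ => (hcover D hD hDA).imp fun _ hk => ⟨hD, hk⟩,
      fun ⟨k, hD, hk⟩ => ⟨hD, hk.trans (hQA k)⟩⟩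
  rw [hunion, Set.ncard_iUnion_of_finite (fun _ => Set.toFinite _), finsum_eq_sum_of_fintype]
  intro j k hjk
  refine Set.disjoint_left.2 fun D hDj hDk => ?_
  obtain ⟨v, hv⟩ := nonempty_of_mem_parts hDj.1
  exact Set.disjoint_left.1 (hdisj hjk) (hDj.2 hv) (hDk.2 hv)

lemma ncard_parts_subset_self (hA : A ∈ G.parts S) :
    {D | D ∈ G.parts S ∧ D ⊆ A}.ncard = 1 := by
  rw [Set.ncard_eq_one]
  refine ⟨A, Set.eq_singleton_iff_unique_mem.2 ⟨⟨hA, subset_rfl⟩, ?_⟩⟩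
  exact fun D ⟨hD, hDA⟩ => eq_of_mem_parts_of_subset hD hA hDA

variable [Fintype E] (w : E → ℕ)

/-- Greedy: add edges of `T` joining two components of `S` while there are any; each one
costs at most `M` and lowers the number of components. -/
lemma exists_connector [Finite V] {M : ℕ} (hS : S ⊆ T) (hw : ∀ e ∈ T, w e ≤ M) :
    ∃ F ⊆ T, G.component (S ∪ F) = G.component T ∧
      setSum w F + M * (G.parts T).ncard ≤ M * (G.parts S).ncard := by
  induction hn : (G.parts S).ncard using Nat.strong_induction_on generalizing S with
  | _ n ih =>
  by_cases hjoin : ∀ e ∈ T, EqvGen (G.rel S) (G.fst e) (G.snd e)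
  · have hcomp : G.component S = G.component T := by
      ext v u
      exact ⟨eqvGen_mono hS, eqvGen_of_forall_mem_eqvGen hjoin⟩
    refine ⟨∅, Set.empty_subset T, by rw [Set.union_empty, hcomp], ?_⟩
    simp [setSum, ← hn, parts, hcomp]
  · push Not at hjoin
    obtain ⟨e, heT, he⟩ := hjoin
    obtain ⟨F, hFT, hF, hcost⟩ :=
      ih _ (hn ▸ G.ncard_parts_insert_lt he) (Set.insert_subset heT hS) rfl
    refine ⟨insert e F, Set.insert_subset heT hFT,
      by rwa [Set.union_insert, ← Set.insert_union], ?_⟩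
    have hmerge := Nat.mul_le_mul_left M (hn ▸ G.ncard_parts_insert_lt he)
    have := setSum_insert_le w e F
    have := hw e heT
    rw [Nat.mul_succ] at hmerge
    omega

lemma exists_spanning_forest_extension [Finite V] {M : ℕ} {S' : Set E} (hTS : T ⊆ S)
    (hT : G.component T = G.component S) (hSS' : S ⊆ S') (hw : ∀ e ∈ S', w e ≤ M) :
    ∃ T' ⊆ S', G.component T' = G.component S' ∧
      setSum w T' + M * (G.parts S').ncard ≤ setSum w T + M * (G.parts S).ncard := by
  obtain ⟨F, hFS', hF, hcost⟩ := G.exists_connector w (hTS.trans hSS') hw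
  have hparts : G.parts T = G.parts S := by simp only [parts, hT]
  refine ⟨T ∪ F, Set.union_subset (hTS.trans hSS') hFS', hF, ?_⟩
  have := setSum_union_le w T F
  rw [hparts] at hcost
  omega

end Multigraph

section Levels

variable (G : Multigraph V E) (w : E → ℕ) (U : Set E)

lemma exists_spanning_subset_Ele [Finite V] [Fintype E] (n : ℕ) :
    ∃ T ⊆ Ele w n \ U, G.component T = G.component (Ele w n \ U) ∧
      setSum w T + 2 ^ n * (G.parts (Ele w n \ U)).ncard ≤
        (G.parts (Ele w (-1) \ U)).ncard
          + ∑ ℓ ∈ Finset.range n, 2 ^ ℓ * (G.parts (Ele w ℓ \ U)).ncard := by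
  induction n with
  | zero =>
    obtain ⟨T, hT, hcomp, hcost⟩ := G.exists_spanning_forest_extension w
      (S := Ele w (-1) \ U) (S' := Ele w (0 : ℕ) \ U) subset_rfl rfl
      (Set.sdiff_subset_sdiff_left (Ele_mono w (by norm_num)))
      fun e he => weight_le_of_mem_Ele he.1
    have hzero : setSum w (Ele w (-1) \ U) = 0 :=
      setSum_eq_zero fun e he => weight_eq_zero_of_mem_Ele_neg_one he.1
    exact ⟨T, hT, hcomp, by simpa [hzero] using hcost⟩
  | succ n ih =>
    obtain ⟨T, hTsub, hTcomp, hTcost⟩ := ih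
    obtain ⟨T', hT', hcomp, hcost⟩ := G.exists_spanning_forest_extension w
      (S' := Ele w (n + 1 : ℕ) \ U) hTsub hTcomp
      (Set.sdiff_subset_sdiff_left (Ele_mono w (by push_cast; omega)))
      fun e he => weight_le_of_mem_Ele he.1
    refine ⟨T', hT', hcomp, ?_⟩
    rw [Finset.sum_range_succ, pow_succ]
    rw [pow_succ] at hcost
    nlinarith

variable {w U} {p : ℕ}

lemma setOf_weight_eq_two_pow_subset (hU : U ⊆ Ele w (p - 1)) :
    {e | w e = 2 ^ p} ⊆ Ele w p \ U := by
  intro e (he : w e = 2 ^ p)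
  refine ⟨Or.inr ⟨p, le_rfl, he⟩, fun heU => ?_⟩
  rcases hU heU with h0 | ⟨ℓ, hℓ, hw⟩
  · simp [he] at h0
  · have := Nat.pow_right_injective le_rfl (he.symm.trans hw)
    omega

variable {G}

lemma component_Ele_eq_univ (hEp : G.Connects {e | w e = 2 ^ p})
    (hU : U ⊆ Ele w (p - 1)) (v : V) : G.component (Ele w p \ U) v = Set.univ :=
  Set.eq_univ_of_forall fun u => G.eqvGen_mono (setOf_weight_eq_two_pow_subset hU) (hEp v u)

lemma parts_Ele_eq_singleton_univ [Nonempty V] (hEp : G.Connects {e | w e = 2 ^ p})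
    (hU : U ⊆ Ele w (p - 1)) : G.parts (Ele w p \ U) = {Set.univ} := by
  ext A
  simp only [Multigraph.parts, component_Ele_eq_univ hEp hU, exists_const]
  rfl

variable (G w U) in
lemma gfun_univ (i : ℤ) :
    gfun G w U i Set.univ = (G.parts (Ele w (-1) \ U)).ncard
      + ∑ ℓ ∈ Finset.range (i + 1).toNat, 2 ^ ℓ * (G.parts (Ele w ℓ \ U)).ncard := by
  simp [gfun, Nat.card_coe_set_eq]

/-- Kruskal's algorithm run level by level builds a spanning tree of `(V, E ∖ U)`. -/
lemma val_add_two_mul_two_pow_le_gfun_univ [Fintype V] [Fintype E] [Nonempty V]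
    (hEp : G.Connects {e | w e = 2 ^ p}) (hU : U ⊆ Ele w (p - 1)) :
    G.val w U + 2 * 2 ^ p ≤ gfun G w U p Set.univ := by
  obtain ⟨T, hTsub, hTcomp, hcost⟩ := exists_spanning_subset_Ele G w U p
  have hconn : G.Connects T := fun x y => by
    change y ∈ G.component T x
    simp [hTcomp, component_Ele_eq_univ hEp hU]
  have hval : G.val w U ≤ setSum w T := Nat.sInf_le ⟨T, fun e he => (hTsub he).2, hconn, rfl⟩
  rw [parts_Ele_eq_singleton_univ hEp hU, Set.ncard_singleton] at hcost
  rw [gfun_univ, show ((p : ℤ) + 1).toNat = p + 1 by omega, Finset.sum_range_succ,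
    parts_Ele_eq_singleton_univ hEp hU, Set.ncard_singleton]
  omega

end Levels

section Cost

variable (G : Multigraph V E) (w c : E → ℕ) (U : Set E)

noncomputable def Multigraph.numEndsIn (A : Set V) (e : E) : ℕ :=
  A.indicator 1 (G.fst e) + A.indicator 1 (G.snd e)

lemma Multigraph.sum_numEndsIn_le {ι : Type*} {F : Finset ι} {T : ι → Set V} {A : Set V}
    (hdisj : (F : Set ι).PairwiseDisjoint T) (hTA : ∀ k ∈ F, T k ⊆ A) (e : E) :
    ∑ k ∈ F, G.numEndsIn (T k) e ≤ G.numEndsIn A e := by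
  have hunion : ⋃ k ∈ F, T k ⊆ A := Set.iUnion₂_subset hTA
  simp only [Multigraph.numEndsIn, Finset.sum_add_distrib,
    ← Finset.indicator_biUnion_apply F T hdisj]
  gcongr

lemma kappa_eq_sum [Fintype E] (i : ℤ) (A : Set V) :
    kappa G w c U i A = ∑ e, (U ∩ Ele w i).indicator (fun e => c e * G.numEndsIn A e) e := by
  simp only [kappa, setSum_eq_sum_indicator, Finset.mul_sum, ← Finset.sum_add_distrib]
  refine Finset.sum_congr rfl fun e _ => ?_
  classical
  simp only [Set.indicator_apply, Set.mem_ofPred_eq, Multigraph.oneEnd, Multigraph.twoEnds,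
    Multigraph.numEndsIn]
  by_cases he : e ∈ U ∩ Ele w i <;> by_cases h1 : G.fst e ∈ A <;>
    by_cases h2 : G.snd e ∈ A <;>
    simp [he, h1, h2, mul_comm]

lemma sum_kappa_le_kappa [Fintype E] {ι : Type*} {F : Finset ι} {T : ι → Set V}
    {lev : ι → ℤ} {i : ℤ} {A : Set V} (hlev : ∀ k ∈ F, lev k ≤ i)
    (hTA : ∀ k ∈ F, T k ⊆ A)
    (hdisj : (F : Set ι).PairwiseDisjoint T) :
    ∑ k ∈ F, kappa G w c U (lev k) (T k) ≤ kappa G w c U i A := by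
  simp only [kappa_eq_sum]
  rw [Finset.sum_comm]
  refine Finset.sum_le_sum fun e _ => ?_
  calc ∑ k ∈ F, (U ∩ Ele w (lev k)).indicator (fun e => c e * G.numEndsIn (T k) e) e
      ≤ ∑ k ∈ F, (U ∩ Ele w i).indicator (fun e => c e * G.numEndsIn (T k) e) e :=
        Finset.sum_le_sum fun k hk => Set.indicator_le_indicator_of_subset
          (Set.inter_subset_inter_right U (Ele_mono w (hlev k hk))) (fun _ => Nat.zero_le _) e
    _ ≤ (U ∩ Ele w i).indicator (fun e => c e * G.numEndsIn A e) e := by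
        by_cases he : e ∈ U ∩ Ele w i
        · simp only [Set.indicator_of_mem he, ← Finset.mul_sum]
          exact Nat.mul_le_mul_left _ (G.sum_numEndsIn_le hdisj hTA e)
        · simp [he]

lemma kappa_univ (i : ℤ) : kappa G w c U i Set.univ = 2 * setSum c (U ∩ Ele w i) := by
  simp [kappa, Multigraph.oneEnd, Multigraph.twoEnds, setSum]

end Cost

section Members

variable {G : Multigraph V E} {w c : E → ℕ} {U : Set E} {p : ℕ} {𝒲 : Set (Set V × ℤ)}

def membersWithin (𝒲 : Set (Set V × ℤ)) (i : ℤ) (A : Set V) : Set (Set V × ℤ) :=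
  {x ∈ 𝒲 | x.1 ⊆ A ∧ x.2 ≤ i}

lemma kappaW_eq (i : ℤ) (A : Set V) :
    kappaW G w c U 𝒲 i A = ∑ᶠ x ∈ membersWithin 𝒲 i A, kappa G w c U x.2 x.1 := rfl

lemma gW_eq (i : ℤ) (A : Set V) :
    gW G w U 𝒲 i A = ∑ᶠ x ∈ membersWithin 𝒲 i A, gfun G w U x.2 x.1 := rfl

namespace IsRemovalPattern

lemma finite_membersWithin (hRP : IsRemovalPattern G w U p 𝒲) (i : ℤ) (A : Set V) :
    (membersWithin 𝒲 i A).Finite :=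
  hRP.finite.subset (Set.sep_subset _ _)

lemma kappaW_le_kappa [Fintype E] (hRP : IsRemovalPattern G w U p 𝒲) (i : ℤ) (A : Set V) :
    kappaW G w c U 𝒲 i A ≤ kappa G w c U i A := by
  have hfin := hRP.finite_membersWithin i A
  rw [kappaW_eq, finsum_mem_eq_finite_toFinset_sum _ hfin]
  refine sum_kappa_le_kappa G w c U (fun x hx => (hfin.mem_toFinset.1 hx).2.2)
    (fun x hx => (hfin.mem_toFinset.1 hx).2.1) fun x hx y hy hxy => ?_
  exact hRP.disjoint x (hfin.mem_toFinset.1 hx).1 y (hfin.mem_toFinset.1 hy).1 hxy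

lemma setSum_removalSet_le_kappaW [Fintype E] (hRP : IsRemovalPattern G w U p 𝒲) :
    setSum c (removalSet G w U 𝒲) ≤ kappaW G w c U 𝒲 p Set.univ := by
  have hmembers : membersWithin 𝒲 p Set.univ = 𝒲 := by
    ext x
    simp only [membersWithin, Set.subset_univ, true_and, Set.mem_sep_iff, and_iff_left_iff_imp]
    exact fun hx => (hRP.levels x hx).2.trans (by omega)
  rw [kappaW_eq, hmembers, finsum_mem_eq_finite_toFinset_sum _ hRP.finite,
    setSum_eq_sum_indicator]
  simp only [kappa_eq_sum]
  rw [Finset.sum_comm]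
  refine Finset.sum_le_sum fun e _ => ?_
  by_cases he : e ∈ removalSet G w U 𝒲
  · obtain ⟨x, hx, hxe, hone⟩ := id he
    have hends : 1 ≤ G.numEndsIn x.1 e := by
      rcases hone with ⟨h1, -⟩ | ⟨-, h2⟩ <;> simp [Multigraph.numEndsIn, *]
    calc (removalSet G w U 𝒲).indicator c e = c e := Set.indicator_of_mem he c
      _ ≤ (U ∩ Ele w x.2).indicator (fun e => c e * G.numEndsIn x.1 e) e := by
        rw [Set.indicator_of_mem hxe]
        exact Nat.le_mul_of_pos_right _ hends
      _ ≤ _ := Finset.single_le_sum (f := fun x : Set V × ℤ =>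
          (U ∩ Ele w x.2).indicator (fun e => c e * G.numEndsIn x.1 e) e)
          (fun _ _ => Nat.zero_le _) (hRP.finite.mem_toFinset.2 hx)
  · simp [he]

end IsRemovalPattern

lemma gfun_eq_sum_children_add [Finite V] {i : ℤ} (hi : 0 ≤ i) {A : Set V}
    (hA : A ∈ G.parts (Ele w i \ U)) {h : ℕ} {Q : Fin h → Set V} (hQinj : Injective Q)
    (hQ : ∀ D, (D ∈ G.parts (Ele w (i - 1) \ U) ∧ D ⊆ A) ↔ ∃ k, Q k = D) :
    gfun G w U i A = ∑ k, gfun G w U (i - 1) (Q k) + 2 ^ i.toNat := by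
  have hQparts k : Q k ∈ G.parts (Ele w (i - 1) \ U) ∧ Q k ⊆ A := (hQ _).2 ⟨k, rfl⟩
  have hdisj : Pairwise (Disjoint on Q) := fun j k hjk =>
    Multigraph.disjoint_of_mem_parts (hQparts j).1 (hQparts k).1 (hQinj.ne hjk)
  have hsplit (ℓ : ℤ) (hℓ : ℓ ≤ i - 1) :
      Nat.card {D | D ∈ G.parts (Ele w ℓ \ U) ∧ D ⊆ A}
        = ∑ k, Nat.card {D | D ∈ G.parts (Ele w ℓ \ U) ∧ D ⊆ Q k} := by
    simp only [Nat.card_coe_set_eq]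
    refine G.ncard_parts_subset_eq_sum hdisj (fun k => (hQparts k).2) fun D hD hDA => ?_
    obtain ⟨B, hB, hDB, hBA⟩ := G.exists_mem_parts_between
      (Set.sdiff_subset_sdiff_left (Ele_mono w hℓ))
      (Set.sdiff_subset_sdiff_left (Ele_mono w (by omega))) hA hD hDA
    obtain ⟨k, rfl⟩ := (hQ B).1 ⟨hB, hBA⟩
    exact ⟨k, hDB⟩
  have htop : Nat.card {D | D ∈ G.parts (Ele w (i.toNat : ℤ) \ U) ∧ D ⊆ A} = 1 := by
    rw [Nat.card_coe_set_eq, Int.toNat_of_nonneg hi, G.ncard_parts_subset_self hA]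
  have hlower : ∑ ℓ ∈ Finset.range i.toNat,
      2 ^ ℓ * Nat.card {D | D ∈ G.parts (Ele w ℓ \ U) ∧ D ⊆ A}
        = ∑ k, ∑ ℓ ∈ Finset.range i.toNat,
            2 ^ ℓ * Nat.card {D | D ∈ G.parts (Ele w ℓ \ U) ∧ D ⊆ Q k} := by
    rw [Finset.sum_comm]
    refine Finset.sum_congr rfl fun ℓ hℓ => ?_
    rw [hsplit ℓ (by simp at hℓ; omega), Finset.mul_sum]
  rw [gfun, show (i + 1).toNat = i.toNat + 1 by omega, Finset.sum_range_succ, htop,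
    hsplit (-1) (by omega), hlower]
  simp only [gfun, Finset.sum_add_distrib, show (i - 1 + 1).toNat = i.toNat by omega]
  ring

end Members

section Exchange

lemma sum_fin_eq_sum_lt_add_add_sum_gt {M : Type*} [AddCommMonoid M] {h s : ℕ}
    (f : Fin h → M) (hs : s < h) :
    ∑ k, f k = ∑ k ∈ Finset.univ.filter (fun k : Fin h => (k : ℕ) < s), f k + f ⟨s, hs⟩
      + ∑ k ∈ Finset.univ.filter (fun k : Fin h => s < (k : ℕ)), f k := by
  rw [← Finset.sum_filter_add_sum_filter_not Finset.univ (fun k : Fin h => (k : ℕ) < s),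
    add_assoc]
  congr 1
  rw [← Finset.sum_filter_add_sum_filter_not _ (· = ⟨s, hs⟩), Finset.filter_filter,
    Finset.filter_filter]
  congr 1
  · rw [Finset.sum_eq_single_of_mem (⟨s, hs⟩ : Fin h) (by simp)]
    simp +contextual
  · refine Finset.sum_congr (Finset.filter_congr fun k _ => ?_) fun _ _ => rfl
    rw [Fin.ext_iff]
    simp only
    omega

lemma sum_mul_sum_le_of_ratio_le {ι : Type*} (g κ : ι → ℕ) {P S : Finset ι}
    (h : ∀ j ∈ P, ∀ k ∈ S, g k * κ j ≤ g j * κ k) :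
    (∑ j ∈ P, κ j) * ∑ k ∈ S, g k ≤ (∑ j ∈ P, g j) * ∑ k ∈ S, κ k := by
  simp only [Finset.sum_mul_sum]
  exact Finset.sum_le_sum fun j hj => Finset.sum_le_sum fun k hk => by
    rw [mul_comm (κ j)]
    exact h j hj k hk

/-- The exchange argument: the prefix `P` of the children sorted by `g/κ`, together with the
part `(gW, κW)` taken from the next child `s`, has ratio at least that of `P`, `s` and the
suffix `S` together. -/
lemma exchange_le {Pg Pk gs κs Sg Sk gW κW b b' : ℕ}
    (hPs : Pk * gs ≤ Pg * κs) (hPS : Pk * Sg ≤ Pg * Sk) (hsS : κs * Sg ≤ gs * Sk)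
    (hW : κW * gs ≤ (gW + b') * κs + b' * κW) (hκW : κW ≤ κs) (hb : b' + b' ≤ b) :
    (Pk + κW) * (Pg + gs + Sg) ≤ (Pg + gW + b) * (Pk + κs + Sk) := by
  rcases Nat.eq_zero_or_pos κs with hκs | hκs
  · subst hκs
    obtain rfl : κW = 0 := by omega
    have : Pk * gs = 0 := by simpa using hPs
    nlinarith
  · refine Nat.le_of_mul_le_mul_left ?_ hκs
    have h1 := Nat.mul_le_mul_left κs hPS
    have h2 := Nat.mul_le_mul_left κW hsS
    have h3 := mul_add_mul_le_mul_add_mul hκW hPs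
    have h4 := Nat.mul_le_mul_right (Pk + κs + Sk) hW
    have h5 := Nat.mul_le_mul_right (b' * (Pk + κs + Sk)) hκW
    have h6 := Nat.mul_le_mul_right (κs * (Pk + κs + Sk)) hb
    nlinarith

end Exchange

section Invariant

variable {G : Multigraph V E} {w c : E → ℕ} {U : Set E} {p : ℕ} {𝒲 : Set (Set V × ℤ)}

/-- Zero on level `-1`, so that the slack at least doubles from each level to the next. -/
def slack (i : ℤ) : ℕ := if 0 ≤ i then 2 ^ i.toNat else 0

lemma slack_of_nonneg {i : ℤ} (hi : 0 ≤ i) : slack i = 2 ^ i.toNat := if_pos hi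

lemma slack_sub_one_add_le {i : ℤ} (hi : 0 ≤ i) :
    slack (i - 1) + slack (i - 1) ≤ slack i := by
  rw [slack_of_nonneg hi, slack]
  split_ifs with h
  · rw [← two_mul, ← pow_succ', show (i - 1).toNat + 1 = i.toNat by omega]
  · simp

variable (G w c U 𝒲) in
def EfficiencyBound (i : ℤ) (A : Set V) : Prop :=
  kappaW G w c U 𝒲 i A * gfun G w U i A
    ≤ (gW G w U 𝒲 i A + slack i) * kappa G w c U i A + slack i * kappaW G w c U 𝒲 i A

lemma efficiencyBound_of_membersWithin_subset {i : ℤ} {A : Set V}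
    (h : membersWithin 𝒲 i A ⊆ {(A, i)}) : EfficiencyBound G w c U 𝒲 i A := by
  rcases Set.subset_singleton_iff_eq.1 h with h | h <;>
    simp only [EfficiencyBound, kappaW_eq, gW_eq, h, finsum_mem_empty, finsum_mem_singleton]
  · simp
  · nlinarith

namespace IsRemovalPattern

lemma eq_of_mem_membersWithin (hRP : IsRemovalPattern G w U p 𝒲) {i : ℤ} {A : Set V}
    (hA : A ∈ G.parts (Ele w i \ U)) {x : Set V × ℤ} (hx : x ∈ membersWithin 𝒲 i A)
    (hxi : x.2 = i) : x = (A, i) := by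
  have hpart := hRP.parts x hx.1
  rw [hxi] at hpart
  exact Prod.ext (Multigraph.eq_of_mem_parts_of_subset hpart hA hx.2.1) hxi

lemma membersWithin_subset_singleton_of_mem (hRP : IsRemovalPattern G w U p 𝒲) {i : ℤ}
    {A : Set V} (hAW : (A, i) ∈ 𝒲) : membersWithin 𝒲 i A ⊆ {(A, i)} := by
  intro x hx
  by_contra hne
  obtain ⟨v, hv⟩ := Multigraph.nonempty_of_mem_parts (hRP.parts x hx.1)
  exact Set.disjoint_left.1 (hRP.disjoint x hx.1 _ hAW hne) hv (hx.2.1 hv)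

lemma membersWithin_eq_union (hRP : IsRemovalPattern G w U p 𝒲) {i : ℤ} {A : Set V}
    (hA : A ∈ G.parts (Ele w i \ U)) (hAW : (A, i) ∉ 𝒲) {h s : ℕ} {Q : Fin h → Set V}
    (hQ : ∀ D, (D ∈ G.parts (Ele w (i - 1) \ U) ∧ D ⊆ A) ↔ ∃ k, Q k = D)
    (hpre : ∀ k : Fin h, (k : ℕ) < s → (Q k, i - 1) ∈ 𝒲)
    (hsuf : ∀ k : Fin h, s ≤ (k : ℕ) → (Q k, i - 1) ∉ 𝒲) :
    membersWithin 𝒲 i A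
      = (fun k => (Q k, i - 1)) '' {k | (k : ℕ) < s} ∪ membersWithin 𝒲 (i - 2) A := by
  ext x
  constructor
  · intro hx
    obtain hxi | hxi | hxi : x.2 = i ∨ x.2 = i - 1 ∨ x.2 ≤ i - 2 := by
      have := hx.2.2
      omega
    · exact absurd (hRP.eq_of_mem_membersWithin hA hx hxi ▸ hx.1) hAW
    · have hpart := hRP.parts x hx.1
      rw [hxi] at hpart
      obtain ⟨k, hk⟩ := (hQ x.1).1 ⟨hpart, hx.2.1⟩
      have hxk : x = (Q k, i - 1) := Prod.ext hk.symm hxi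
      refine Or.inl ⟨k, ?_, hxk.symm⟩
      by_contra hks
      exact hsuf k (not_lt.1 hks) (hxk ▸ hx.1)
    · exact Or.inr ⟨hx.1, hx.2.1, hxi⟩
  · rintro (⟨k, hk, rfl⟩ | hx)
    · exact ⟨hpre k hk, ((hQ (Q k)).2 ⟨k, rfl⟩).2, by simp⟩
    · exact ⟨hx.1, hx.2.1, hx.2.2.trans (by omega)⟩

lemma finsum_membersWithin_eq (hRP : IsRemovalPattern G w U p 𝒲) {i : ℤ} {A : Set V}
    (hA : A ∈ G.parts (Ele w i \ U)) (hAW : (A, i) ∉ 𝒲) {h s : ℕ} {Q : Fin h → Set V}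
    (hQinj : Injective Q)
    (hQ : ∀ D, (D ∈ G.parts (Ele w (i - 1) \ U) ∧ D ⊆ A) ↔ ∃ k, Q k = D)
    (hpre : ∀ k : Fin h, (k : ℕ) < s → (Q k, i - 1) ∈ 𝒲)
    (hsuf : ∀ k : Fin h, s ≤ (k : ℕ) → (Q k, i - 1) ∉ 𝒲) (f : Set V × ℤ → ℕ) :
    ∑ᶠ x ∈ membersWithin 𝒲 i A, f x
      = ∑ k ∈ Finset.univ.filter (fun k : Fin h => (k : ℕ) < s), f (Q k, i - 1)
        + ∑ᶠ x ∈ membersWithin 𝒲 (i - 2) A, f x := by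
  have hdisj : Disjoint ((fun k => (Q k, i - 1)) '' {k : Fin h | (k : ℕ) < s})
      (membersWithin 𝒲 (i - 2) A) := by
    refine Set.disjoint_left.2 ?_
    rintro _ ⟨k, -, rfl⟩ hx
    have := hx.2.2
    simp only at this
    omega
  rw [hRP.membersWithin_eq_union hA hAW hQ hpre hsuf,
    finsum_mem_union hdisj (Set.toFinite _) (hRP.finite_membersWithin _ _),
    finsum_mem_image fun _ _ _ _ hkl => hQinj (congrArg Prod.fst hkl)]
  congr 1
  rw [← finsum_mem_coe_finset]
  simp

lemma membersWithin_sub_two_eq (hRP : IsRemovalPattern G w U p 𝒲) {i : ℤ} {A B : Set V}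
    (hB : B ∈ G.parts (Ele w (i - 1) \ U)) (hBA : B ⊆ A) (hBW : (B, i - 1) ∉ 𝒲)
    (hdeep : ∀ x ∈ 𝒲, x.2 ≤ i - 2 → x.1 ⊆ B) :
    membersWithin 𝒲 (i - 2) A = membersWithin 𝒲 (i - 1) B := by
  ext x
  constructor
  · exact fun hx => ⟨hx.1, hdeep x hx.1 hx.2.2, hx.2.2.trans (by omega)⟩
  · intro hx
    refine ⟨hx.1, hx.2.1.trans hBA, ?_⟩
    by_contra hlev
    exact hBW (hRP.eq_of_mem_membersWithin hB hx (by have := hx.2.2; omega) ▸ hx.1)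

lemma efficiencyBound_of_children [Finite V] [Fintype E] (hRP : IsRemovalPattern G w U p 𝒲)
    {i : ℤ} (hi : 0 ≤ i) {A : Set V} (hA : A ∈ G.parts (Ele w i \ U)) (hAW : (A, i) ∉ 𝒲)
    {h s : ℕ} {Q : Fin h → Set V} (hQinj : Injective Q)
    (hQ : ∀ D, (D ∈ G.parts (Ele w (i - 1) \ U) ∧ D ⊆ A) ↔ ∃ k, Q k = D)
    (hsorted : ∀ j k : Fin h, j ≤ k →
      gfun G w U (i - 1) (Q k) * kappa G w c U (i - 1) (Q j)
        ≤ gfun G w U (i - 1) (Q j) * kappa G w c U (i - 1) (Q k))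
    (hpre : ∀ k : Fin h, (k : ℕ) < s → (Q k, i - 1) ∈ 𝒲)
    (hsuf : ∀ k : Fin h, s ≤ (k : ℕ) → (Q k, i - 1) ∉ 𝒲)
    (hdeep : ∀ x ∈ 𝒲, x.2 ≤ i - 2 → ∃ hs : s < h, x.1 ⊆ Q ⟨s, hs⟩)
    (hIH : ∀ hs : s < h, EfficiencyBound G w c U 𝒲 (i - 1) (Q ⟨s, hs⟩)) :
    EfficiencyBound G w c U 𝒲 i A := by
  have hQparts k : Q k ∈ G.parts (Ele w (i - 1) \ U) ∧ Q k ⊆ A := (hQ _).2 ⟨k, rfl⟩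
  set gk := fun k => gfun G w U (i - 1) (Q k)
  set κk := fun k => kappa G w c U (i - 1) (Q k)
  have hκA : ∑ k, κk k ≤ kappa G w c U i A :=
    sum_kappa_le_kappa G w c U (fun _ _ => by omega) (fun k _ => (hQparts k).2)
      fun j _ k _ hjk =>
        Multigraph.disjoint_of_mem_parts (hQparts j).1 (hQparts k).1 (hQinj.ne hjk)
  have hg : gfun G w U i A = ∑ k, gk k + slack i := by
    rw [gfun_eq_sum_children_add hi hA hQinj hQ, slack_of_nonneg hi]
  have hκW := hRP.finsum_membersWithin_eq hA hAW hQinj hQ hpre hsuf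
    fun x => kappa G w c U x.2 x.1
  have hgW := hRP.finsum_membersWithin_eq hA hAW hQinj hQ hpre hsuf fun x => gfun G w U x.2 x.1
  rw [← kappaW_eq] at hκW
  rw [← gW_eq] at hgW
  suffices key :
      kappaW G w c U 𝒲 i A * ∑ k, gk k ≤ (gW G w U 𝒲 i A + slack i) * ∑ k, κk k by
    rw [EfficiencyBound, hg]
    nlinarith [Nat.mul_le_mul_left (gW G w U 𝒲 i A + slack i) hκA]
  by_cases hs : s < h
  · have hdeep' := hRP.membersWithin_sub_two_eq (hQparts ⟨s, hs⟩).1 (hQparts _).2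
      (hsuf _ le_rfl) fun x hx hxl => (hdeep x hx hxl).2
    rw [hdeep', ← kappaW_eq] at hκW
    rw [hdeep', ← gW_eq] at hgW
    rw [hκW, hgW, sum_fin_eq_sum_lt_add_add_sum_gt gk hs, sum_fin_eq_sum_lt_add_add_sum_gt κk hs]
    refine exchange_le ?_ ?_ ?_ (hIH hs) (hRP.kappaW_le_kappa _ _) (slack_sub_one_add_le hi)
    · simpa using sum_mul_sum_le_of_ratio_le gk κk (S := {⟨s, hs⟩}) fun j hj k hk =>
        hsorted j k (by simp at hj hk; simp [hk, Fin.le_def]; omega)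
    · exact sum_mul_sum_le_of_ratio_le gk κk fun j hj k hk =>
        hsorted j k (by simp at hj hk; rw [Fin.le_def]; omega)
    · simpa using sum_mul_sum_le_of_ratio_le gk κk (P := {⟨s, hs⟩}) fun j hj k hk =>
        hsorted j k (by simp at hj hk; simp [hj, Fin.le_def]; omega)
  · have hempty : membersWithin 𝒲 (i - 2) A = ∅ :=
      Set.eq_empty_of_forall_notMem fun x hx => hs (hdeep x hx.1 hx.2.2).1
    have hall : Finset.univ.filter (fun k : Fin h => (k : ℕ) < s) = Finset.univ := by
      ext k
      simp only [Finset.mem_filter, Finset.mem_univ, true_and, iff_true]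
      omega
    rw [hempty, finsum_mem_empty, hall, add_zero] at hκW hgW
    rw [hκW, hgW]
    nlinarith

theorem efficiencyBound [Finite V] [Fintype E] (hRP : IsRemovalPattern G w U p 𝒲)
    (hEff : IsEfficient G w c U p 𝒲) {i : ℤ} (hi : -1 ≤ i) (hip : i ≤ p) {A : Set V}
    (hA : A ∈ G.parts (Ele w i \ U)) : EfficiencyBound G w c U 𝒲 i A := by
  induction i, hi using Int.leInduction generalizing A with
  | base =>
    refine efficiencyBound_of_membersWithin_subset fun x hx =>
      hRP.eq_of_mem_membersWithin hA hx ?_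
    have := (hRP.levels x hx.1).1
    have := hx.2.2
    omega
  | succ i hi ih =>
    obtain ⟨j, rfl⟩ : ∃ j, i = j - 1 := ⟨i + 1, by ring⟩
    rw [sub_add_cancel] at hip hA ⊢
    by_cases hAW : (A, j) ∈ 𝒲
    · exact efficiencyBound_of_membersWithin_subset
        (hRP.membersWithin_subset_singleton_of_mem hAW)
    rcases hEff j (by omega) hip A hA with
      hnone | ⟨-, h, Q, s, hQinj, hQ, hsorted, -, hpre, hsuf, hdeep⟩
    · refine efficiencyBound_of_membersWithin_subset fun x hx =>
        hRP.eq_of_mem_membersWithin hA hx ?_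
      by_contra hne
      exact hnone x hx.1 (lt_of_le_of_ne hx.2.2 hne) hx.2.1
    · exact hRP.efficiencyBound_of_children (by omega) hA hAW hQinj hQ hsorted hpre hsuf hdeep
        fun hs => ih (by omega) ((hQ _).2 ⟨_, rfl⟩).1

lemma setSum_removalSet_mul_val_le [Fintype V] [Fintype E] [Nonempty V]
    (hRP : IsRemovalPattern G w U p 𝒲) (hEff : IsEfficient G w c U p 𝒲)
    (hEp : G.Connects {e | w e = 2 ^ p}) (hU : U ⊆ Ele w (p - 1)) :
    setSum c (removalSet G w U 𝒲) * G.val w U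
      ≤ (gW G w U 𝒲 p Set.univ + 2 ^ p) * (2 * setSum c U) := by
  have hbound := hRP.efficiencyBound hEff (i := p) (by omega) le_rfl
    (parts_Ele_eq_singleton_univ hEp hU ▸ rfl : Set.univ ∈ G.parts (Ele w p \ U))
  rw [EfficiencyBound, kappa_univ, Set.inter_eq_left.2 (hU.trans (Ele_mono w (by omega))),
    slack_of_nonneg (by omega), Int.toNat_natCast] at hbound
  have hR := Nat.mul_le_mul_right (G.val w U) (hRP.setSum_removalSet_le_kappaW (c := c))
  have hval := Nat.mul_le_mul_left (kappaW G w c U 𝒲 p Set.univ)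
    (val_add_two_mul_two_pow_le_gfun_univ hEp hU)
  -- keeps `ring_nf` from merging `2 * 2 ^ p` into `2 ^ (p + 1)`
  generalize (2 : ℕ) ^ p = P at *
  nlinarith

end IsRemovalPattern

end Invariant

section Patterns

variable [Fintype V] [Fintype E]

theorem gW_lower_bound_general
    (G : Multigraph V E) (w : E → ℕ) (c : E → ℕ)
    (p : ℕ)
    (hEp : G.Connects {e | w e = 2 ^ p})
    (U : Set E) (hU : U ⊆ Ele w ((p : ℤ) - 1))
    (𝒲 : Set (Set V × ℤ))
    (hRP : IsRemovalPattern G w U p 𝒲)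
    (hEff : IsEfficient G w c U p 𝒲) :
    (1 / 2 : ℝ) * ((setSum c (removalSet G w U 𝒲) : ℝ) / (setSum c U : ℝ))
        * (G.val w U : ℝ) - 2 ^ p
      ≤ (gW G w U 𝒲 (p : ℤ) Set.univ : ℝ) := by
  rcases Nat.eq_zero_or_pos (setSum c U) with hcU | hcU
  · simp only [hcU, CharP.cast_eq_zero, div_zero, mul_zero, zero_mul, zero_sub]
    have : (0 : ℝ) ≤ gW G w U 𝒲 p Set.univ := Nat.cast_nonneg _
    linarith [pow_pos (two_pos : (0 : ℝ) < 2) p]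
  obtain ⟨e, -⟩ := nonempty_of_setSum_ne_zero hcU.ne'
  have : Nonempty V := ⟨G.fst e⟩
  have key : (setSum c (removalSet G w U 𝒲) * G.val w U : ℝ)
      ≤ (gW G w U 𝒲 p Set.univ + 2 ^ p) * (2 * setSum c U) := by
    exact_mod_cast hRP.setSum_removalSet_mul_val_le hEff hEp hU
  rw [sub_le_iff_le_add]
  calc (1 / 2 : ℝ) * (setSum c (removalSet G w U 𝒲) / setSum c U) * G.val w U
      = setSum c (removalSet G w U 𝒲) * G.val w U / (2 * setSum c U) := by ring
    _ ≤ gW G w U 𝒲 p Set.univ + 2 ^ p := by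
      rw [div_le_iff₀ (by positivity)]
      exact key

/-- For an efficient removal pattern `𝒲` with removal set
`R = R(𝒲)`, if `U ≠ ∅` then `g_p^𝒲(V) ≥ (1/2)·(c(R)/c(U))·val(U) − 2^p`. -/
theorem gW_lower_bound
    (G : Multigraph V E) (w : E → ℕ) (c : E → ℕ) (hc : ∀ e, 0 < c e)
    (p : ℕ) (hp : 1 ≤ p)
    (hw : ∀ e, w e = 0 ∨ ∃ i ≤ p, w e = 2 ^ i)
    (hEp : G.Connects {e | w e = 2 ^ p})
    (U : Set E) (hU : U ⊆ Ele w ((p : ℤ) - 1)) (hUne : U.Nonempty)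
    (𝒲 : Set (Set V × ℤ))
    (hRP : IsRemovalPattern G w U p 𝒲)
    (hEff : IsEfficient G w c U p 𝒲) :
    (1 / 2 : ℝ) * ((setSum c (removalSet G w U 𝒲) : ℝ) / (setSum c U : ℝ))
        * (G.val w U : ℝ) - 2 ^ p
      ≤ (gW G w U 𝒲 (p : ℤ) Set.univ : ℝ) :=
  gW_lower_bound_general G w c p hEp U hU 𝒲 hRP hEff

end Patterns

end MSTInterdiction
end
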